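/- arXiv:math/0510353 — 2 statements merged into one kernel-verified Lean document; each statement's English description precedes it below -/
import Mathlib

section
/- Let G be a group and let A, B, C be subgroups of G with A ⊆ C. If the set of double cosets BgA (g ∈ G) is finite, then the set of double cosets (B ∩ C)cA with c ∈ C (double cosets of the subgroups B ∩ C and A inside the group C) is also finite. -/
/-!
Inclusion `C ↪ G` induces a map `(B ∩ C)\C/A → B\G/A`, and it is injective: if `y = b x a` with
`x, y ∈ C` and `a ∈ A ⊆ C`, then `b = y a⁻¹ x⁻¹` lies in `C` as well. So the source is finite
whenever the target is.
-/

namespace DoubleCoset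

variable {G : Type*} [Group G]

def subgroupOfMap (C H K : Subgroup G) :
    Quotient ((H.subgroupOf C : Subgroup C) : Set C) ((K.subgroupOf C : Subgroup C) : Set C) →
      Quotient (H : Set G) (K : Set G) :=
  _root_.Quotient.lift (fun c : C => mk H K (c : G)) fun x y hxy => by
    obtain ⟨h, hh, k, hk, rfl⟩ := rel_iff.mp hxy
    exact (eq H K x _).mpr ⟨h, hh, k, hk, rfl⟩

theorem subgroupOfMap_injective {C H K : Subgroup G} (hKC : K ≤ C) :
    Function.Injective (subgroupOfMap C H K) := by
  rintro ⟨x⟩ ⟨y⟩ hxy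
  obtain ⟨h, hh, k, hk, hy⟩ := (eq H K x y).mp hxy
  have hkC : k ∈ C := hKC hk
  have hhC : h ∈ C := by
    have : h = y * k⁻¹ * (x : G)⁻¹ := by rw [hy]; group
    rw [this]
    exact C.mul_mem (C.mul_mem y.2 (C.inv_mem hkC)) (C.inv_mem x.2)
  exact (eq _ _ x y).mpr ⟨⟨h, hhC⟩, hh, ⟨k, hkC⟩, hk, Subtype.ext hy⟩

end DoubleCoset

/-- **Proposition 2.6(1)** Let `G` be a group and `A, B, C` subgroups with `A ⊆ C`.
If `|B \ G / A| < ∞` then `|(B ∩ C) \ C / A| < ∞`. -/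
theorem finite_double_cosets_restrict
    (G : Type) [Group G] (A B C : Subgroup G) (hAC : A ≤ C)
    (h : Finite (DoubleCoset.Quotient (B : Set G) (A : Set G))) :
    Finite (DoubleCoset.Quotient (((B ⊓ C).subgroupOf C : Subgroup C) : Set C)
      ((A.subgroupOf C : Subgroup C) : Set C)) := by
  rw [Subgroup.inf_subgroupOf_right]
  exact Finite.of_injective _ (DoubleCoset.subgroupOfMap_injective (H := B) hAC)
end

section
/- Let Γ = G∗_C be an HNN extension with associated subgroup C and stable letter t, and let M be a ℚΓ-module on which t acts trivially. Then H₁(Γ, M) contains a subgroup that admits a surjective ℚ-linear map onto H₀(C, M), the module of C-coinvariants of M. -/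
open CategoryTheory

/-- A *limit group*: a finitely generated group `G` such that for every finite subset
`T` of `G` there is a homomorphism from `G` to a free group that is injective on `T`. -/
def IsLimitGroup (G : Type) [Group G] : Prop :=
  Group.FG G ∧
    ∀ T : Finset G, ∃ (ι : Type) (f : G →* FreeGroup ι), Set.InjOn f ↑T

/-- A group `G` is of type `FPₙ(ℚ)` if the trivial `ℚG`-module `ℚ` admits a projective
resolution by `ℚG`-modules that is finitely generated in all dimensions `≤ n`. -/
def IsTypeFPQ (G : Type) [Group G] (n : ℕ) : Prop :=
  ∃ P : CategoryTheory.ProjectiveResolution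
      (ModuleCat.of (MonoidAlgebra ℚ G) (Representation.trivial ℚ (G := G) (V := ℚ)).asModule),
    ∀ i ≤ n, Module.Finite (MonoidAlgebra ℚ G) (P.complex.X i)

/-- The augmentation submodule of a representation: the ℚ-span of the elements
`g • m - m`. -/
def augSubmodule {G : Type} [Group G] (M : Rep.{0} ℚ G) : Submodule ℚ M :=
  Submodule.span ℚ {x : M | ∃ (g : G) (m : M), x = M.ρ g m - m}

/-- The coinvariants `H₀(G, M)` of a representation: the quotient of `M` by the
ℚ-span of the elements `g • m - m`. -/
noncomputable def coinvariants {G : Type} [Group G] (M : Rep.{0} ℚ G) : ModuleCat ℚ :=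
  ModuleCat.of ℚ (M ⧸ augSubmodule M)

/-- The map on coinvariants induced by a morphism of representations. -/
noncomputable def coinvariantsMap {G : Type} [Group G] {M N : Rep.{0} ℚ G} (f : M ⟶ N) :
    coinvariants M ⟶ coinvariants N :=
  ModuleCat.ofHom <| Submodule.mapQ (augSubmodule M) (augSubmodule N) f.hom.toLinearMap <| by
    rw [augSubmodule, Submodule.span_le]
    rintro x ⟨g, m, rfl⟩
    simp only [SetLike.mem_coe, Submodule.mem_comap, map_sub]
    exact Submodule.subset_span ⟨g, f.hom m, by
      change f.hom (M.ρ g m) - f.hom m = _; rw [Rep.hom_comm_apply f g m]⟩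

/-- The coinvariants functor `Rep ℚ G ⥤ ModuleCat ℚ`. -/
noncomputable def coinvariantsFunctor (G : Type) [Group G] : Rep.{0} ℚ G ⥤ ModuleCat ℚ where
  obj := coinvariants
  map := coinvariantsMap
  map_id _ := ModuleCat.hom_ext <| Submodule.linearMap_qext _ rfl
  map_comp _ _ := ModuleCat.hom_ext <| Submodule.linearMap_qext _ rfl

instance (G : Type) [Group G] : (coinvariantsFunctor G).Additive where
  map_add := ModuleCat.hom_ext <| Submodule.linearMap_qext _ rfl

/-- Group homology `Hₙ(G, M)` of `G` with coefficients in the `ℚG`-module `M`,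
defined as the `n`-th left derived functor of the coinvariants functor applied to `M`. -/
noncomputable def QHomology (n : ℕ) (G : Type) [Group G] (M : Rep.{0} ℚ G) : ModuleCat ℚ :=
  (((coinvariantsFunctor G).leftDerived n).obj M : ModuleCat ℚ)

/-!
Let `D : M → M_C` be the projection onto the `C`-coinvariants. As `D` is `C`-invariant, the
relations of `Γ` allow `G` to act on `M × M_C` through the first factor and `t` by
`(m, q) ↦ (t • m, q + D m)`. This is an extension of `M` by the trivial module `M_C`, and its
connecting map `H₁(Γ, M) → H₀(Γ, M_C) = M_C` hits `t • e - e = (0, D m)` for any lift `e` of a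
`t`-fixed `m`. Since `t` fixes all of `M`, the connecting map is onto.
-/

namespace HNNExtension

open LinearMap (GeneralLinearGroup)

variable {G : Type*} [Group G] {A B : Subgroup G} {φ : A ≃* B}

section

variable {k V W : Type*} [CommSemiring k] [AddCommMonoid V] [Module k V] [AddCommMonoid W]
  [Module k W]

theorem intertwines_of_of_and_t (ρ : Representation k (HNNExtension G A B φ) V)
    (σ : Representation k (HNNExtension G A B φ) W) (f : V →ₗ[k] W)
    (hof : ∀ g, f ∘ₗ ρ (of g) = σ (of g) ∘ₗ f) (ht : f ∘ₗ ρ t = σ t ∘ₗ f)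
    (γ : HNNExtension G A B φ) : f ∘ₗ ρ γ = σ γ ∘ₗ f := by
  induction γ using induction_on with
  | of g => exact hof g
  | t => exact ht
  | mul x y hx hy =>
    simp only [map_mul, Module.End.mul_eq_comp, ← LinearMap.comp_assoc, hx]
    simp only [LinearMap.comp_assoc, hy]
  | inv x hx =>
    ext v
    simpa only [LinearMap.comp_apply, Representation.self_inv_apply,
      Representation.inv_self_apply] using congr(σ x⁻¹ ($hx (ρ x⁻¹ v))).symm

end

variable {k V Q : Type*} [CommSemiring k] [AddCommGroup V] [Module k V] [AddCommGroup Q]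
  [Module k Q] (ρ : Representation k (HNNExtension G A B φ) V) (D : V →ₗ[k] Q)
  (hD : ∀ a : A, D ∘ₗ ρ (of (a : G)) = D)

noncomputable def foxExtension : Representation k (HNNExtension G A B φ) (V × Q) :=
  (Units.coeHom _).comp <| lift (Representation.prod (ρ.comp of) (.trivial k G Q)).asGroupHom
    (GeneralLinearGroup.ofLinearEquiv <|
      (GeneralLinearGroup.toLinearEquiv (ρ.asGroupHom t)).skewProd (.refl k Q) D) fun a =>
    Units.ext <| LinearMap.ext fun x => Prod.ext
      (by simpa [Representation.asGroupHom_apply] using congr(ρ $(t_mul_of a) x.1))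
      (by simpa [Representation.asGroupHom_apply] using congr($(hD a) x.1))

@[simp]
theorem foxExtension_of (g : G) (x : V × Q) :
    foxExtension ρ D hD (of g) x = (ρ (of g) x.1, x.2) := by
  simp [foxExtension, Representation.asGroupHom_apply]

@[simp]
theorem foxExtension_t (x : V × Q) :
    foxExtension ρ D hD t x = (ρ t x.1, x.2 + D x.1) := by
  simp [foxExtension, Representation.asGroupHom_apply]

noncomputable def foxExtensionFst : (foxExtension ρ D hD).IntertwiningMap ρ where
  toLinearMap := LinearMap.fst k V Q
  isIntertwining' := intertwines_of_of_and_t _ _ _ (fun g => by ext <;> simp) (by ext <;> simp)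

@[simp]
theorem foxExtensionFst_apply (x : V × Q) : foxExtensionFst ρ D hD x = x.1 := rfl

theorem foxExtension_apply_zero_fst (γ : HNNExtension G A B φ) (q : Q) :
    foxExtension ρ D hD γ (0, q) = (0, q) :=
  congr($(intertwines_of_of_and_t (.trivial k _ Q) (foxExtension ρ D hD) (LinearMap.inr k V Q)
    (fun g => by ext <;> simp)
    (by ext <;> simp) γ) q).symm

end HNNExtension

section Homology

variable {Γ : Type} [Group Γ] {M : Rep.{0} ℚ Γ} {Q : Type*} [AddCommGroup Q] [Module ℚ Q]

/-- The chains of the complex computing `H₁` are `P₁ ⧸ augSubmodule`: so `τ` is a functional on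
chains vanishing on boundaries, and the hypothesis on `p` says that `p` is a cycle. -/
theorem exists_linearMap_QHomology_one (P : ProjectiveResolution M)
    (τ : P.complex.X 1 →ₗ[ℚ] Q) (hτ : augSubmodule (P.complex.X 1) ≤ LinearMap.ker τ)
    (hτd : ∀ p, τ ((P.complex.d 2 1).hom p) = 0) :
    ∃ δ : QHomology 1 Γ M →ₗ[ℚ] Q, ∀ p, (P.complex.d 1 0).hom p ∈ augSubmodule (P.complex.X 0) →
      τ p ∈ LinearMap.range δ := by
  let K := ((coinvariantsFunctor Γ).mapHomologicalComplex _).obj P.complex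
  let S := (K.sc' 2 1 0).moduleCatLeftHomologyData
  let e : QHomology 1 Γ M ≅ S.H :=
    P.isoLeftDerivedObj _ 1 ≪≫ K.homologyIsoSc' 2 1 0 (by simp) (by simp) ≪≫ S.homologyIso
  let ψ : coinvariants (P.complex.X 1) →ₗ[ℚ] Q := (augSubmodule _).liftQ τ hτ
  have hψ : LinearMap.range (K.sc' 2 1 0).moduleCatToCycles ≤
      LinearMap.ker (ψ ∘ₗ (LinearMap.ker (K.sc' 2 1 0).g.hom).subtype) := by
    rintro _ ⟨x, rfl⟩
    obtain ⟨p, rfl⟩ := Submodule.Quotient.mk_surjective _ x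
    exact hτd p
  refine ⟨Submodule.liftQ _ _ hψ ∘ₗ e.hom.hom, fun p hp => ?_⟩
  have hz : (K.sc' 2 1 0).g.hom (Submodule.Quotient.mk p) = 0 :=
    (Submodule.Quotient.mk_eq_zero _).2 hp
  obtain ⟨x, hx⟩ := (ModuleCat.epi_iff_surjective e.hom).1 inferInstance
    (Submodule.Quotient.mk ⟨_, hz⟩)
  refine ⟨x, ?_⟩
  show Submodule.liftQ _ _ hψ (e.hom.hom x) = τ p
  rw [hx]
  rfl

/-- The connecting map of the extension `ker π → E → M`, read off by a map `κ` that is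
`Γ`-invariant on `ker π`. -/
theorem exists_linearMap_QHomology_one_of_epi {E : Rep.{0} ℚ Γ} (π : E ⟶ M) [Epi π]
    (κ : E →ₗ[ℚ] Q) (hκ : ∀ γ e, π.hom e = 0 → κ (E.ρ γ e) = κ e) :
    ∃ δ : QHomology 1 Γ M →ₗ[ℚ] Q, ∀ γ m, M.ρ γ m = m →
      ∃ e, π.hom e = m ∧ κ (E.ρ γ e - e) ∈ LinearMap.range δ := by
  let P := ProjectiveResolution.of M
  let ε : P.complex.X 0 ⟶ M := P.π.f 0
  let σ := Projective.factorThru ε π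
  have hσ (x) : π.hom (σ.hom x) = ε.hom x := congr($(Projective.factorThru_comp ε π).hom x)
  have hεd (p) : ε.hom ((P.complex.d 1 0).hom p) = 0 := congr($(P.complex_d_comp_π_f_zero).hom p)
  have hexact (y) (hy : ε.hom y = 0) : ∃ p, (P.complex.d 1 0).hom p = y :=
    (ShortComplex.moduleCat_exact_iff _).1 (P.exact₀.map (forget₂ _ (ModuleCat ℚ))) y hy
  let τ := κ ∘ₗ σ.hom.toLinearMap ∘ₗ (P.complex.d 1 0).hom.toLinearMap
  have hτ : augSubmodule _ ≤ LinearMap.ker τ := by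
    rw [augSubmodule, Submodule.span_le]
    rintro _ ⟨γ, p, rfl⟩
    have hκp := hκ γ (σ.hom ((P.complex.d 1 0).hom p)) (by rw [hσ, hεd])
    simp [τ, Rep.hom_comm_apply, hκp]
  have hτd (p) : τ ((P.complex.d 2 1).hom p) = 0 := by
    have hdd : (P.complex.d 1 0).hom ((P.complex.d 2 1).hom p) = 0 :=
      congr($(P.complex.d_comp_d 2 1 0).hom p)
    simp [τ, hdd]
  obtain ⟨δ, hδ⟩ := exists_linearMap_QHomology_one P τ hτ hτd
  refine ⟨δ, fun γ m hm => ?_⟩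
  obtain ⟨p₀, rfl⟩ := (Rep.epi_iff_surjective ε).1 (inferInstanceAs (Epi (P.π.f 0))) m
  obtain ⟨p₁, hp₁⟩ := hexact ((P.complex.X 0).ρ γ p₀ - p₀) (by simp [Rep.hom_comm_apply, hm])
  refine ⟨σ.hom p₀, hσ p₀, ?_⟩
  simpa [τ, hp₁, Rep.hom_comm_apply] using
    hδ p₁ (hp₁ ▸ Submodule.subset_span ⟨γ, p₀, rfl⟩)

end Homology

/-- **Lemma 3.1 (Fox calculus)** Let `Γ = G ∗_C` be an HNN extension with stable letter
`t`, and let `M` be a `ℚΓ`-module on which `t` acts trivially.  Then `H₁(Γ, M)`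
contains a subgroup that admits an epimorphism onto `H₀(C, M)`. -/
theorem H1_of_HNN_surjects_onto_coinvariants
    (G : Type) [Group G] (C C' : Subgroup G) (φ : C ≃* C')
    (M : Rep.{0} ℚ (HNNExtension G C C' φ))
    (htriv : ∀ m : M, M.ρ HNNExtension.t m = m) :
    ∃ (W : Submodule ℚ (QHomology 1 (HNNExtension G C C' φ) M))
      (f : W →ₗ[ℚ] (M ⧸ Submodule.span ℚ
        {x : M | ∃ (c : C) (m : M), x = M.ρ (HNNExtension.of (c : G)) m - m})),
      Function.Surjective f := by
  set N := Submodule.span ℚ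
    {x : M | ∃ (c : C) (m : M), x = M.ρ (HNNExtension.of (c : G)) m - m}
  have hD (c : C) : N.mkQ ∘ₗ M.ρ (HNNExtension.of (c : G)) = N.mkQ :=
    LinearMap.ext fun m => (Submodule.Quotient.eq N).2 (Submodule.subset_span ⟨c, m, rfl⟩)
  let π : Rep.of (HNNExtension.foxExtension M.ρ N.mkQ hD) ⟶ M :=
    Rep.ofHom (HNNExtension.foxExtensionFst M.ρ N.mkQ hD)
  have : Epi π := (Rep.epi_iff_surjective π).2 Prod.fst_surjective
  obtain ⟨δ, hδ⟩ := exists_linearMap_QHomology_one_of_epi π (LinearMap.snd ℚ M _)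
    (by rintro γ ⟨_, q⟩ rfl; simp [HNNExtension.foxExtension_apply_zero_fst])
  refine ⟨⊤, δ.domRestrict ⊤, fun q => ?_⟩
  obtain ⟨m, rfl⟩ := N.mkQ_surjective q
  obtain ⟨e, rfl, x, hx⟩ := hδ HNNExtension.t m (htriv m)
  exact ⟨⟨x, trivial⟩, by simpa [π] using hx⟩
end
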